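/- arXiv:2604.18561 — 4 statements merged into one kernel-verified Lean document; each statement's English description precedes it below -/
import Mathlib

section
/- Fix an integer n ≥ 4 and a real number r0 > 0, and define b : (r0, ∞) → ℝ by b(s) = r0 · ∫_{s/r0}^∞ (t^{2n−4} − 1)^{−1/2} dt. Then b is twice differentiable on (r0, ∞) and satisfies the ordinary differential equation s·b''(s) + (n−1)·(1 + b'(s)²)·b'(s) = −(1 + b'(s)²)^{3/2} · r0^{n−2} · s^{2−n} for every s ∈ (r0, ∞). -/
open Set MeasureTheory Filter

/-- The Schoen-Yau/Eichmair barrier profile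
`b(s) = r0 · ∫_{s/r0}^∞ (t^{2n-4} - 1)^{-1/2} dt`. -/
noncomputable def jangB (n : ℕ) (r0 : ℝ) (s : ℝ) : ℝ :=
  r0 * ∫ t in Set.Ioi (s / r0), (t ^ (2 * n - 4) - 1) ^ (-(1 / 2) : ℝ)

namespace JangAux

/-- The integrand. -/
noncomputable def jf (n : ℕ) : ℝ → ℝ := fun t => (t ^ (2 * n - 4) - 1) ^ (-(1 / 2) : ℝ)

lemma jf_continuousAt (n : ℕ) (hn : 4 ≤ n) {t : ℝ} (ht : 1 < t) :
    ContinuousAt (jf n) t := by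
  have hA0 : (0 : ℝ) < t ^ (2 * n - 4) - 1 := by
    have : (1 : ℝ) < t ^ (2 * n - 4) := one_lt_pow₀ ht (by omega)
    linarith
  exact ContinuousAt.rpow_const (by fun_prop) (Or.inl hA0.ne')

lemma jf_continuousOn (n : ℕ) (hn : 4 ≤ n) : ContinuousOn (jf n) (Ioi 1) :=
  continuousOn_of_forall_continuousAt fun _ ht => jf_continuousAt n hn ht

lemma jf_integrableOn (n : ℕ) (hn : 4 ≤ n) {c : ℝ} (hc : 1 < c) :
    IntegrableOn (jf n) (Ioi c) := by
  set m := 2 * n - 4 with hm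
  have hm4 : 4 ≤ m := by omega
  have hc0 : 0 < c := lt_trans one_pos hc
  set D : ℝ := 1 - (1 / c) ^ m with hD
  have hD0 : 0 < D := by
    have : (1 / c) ^ m < 1 := by
      apply pow_lt_one₀ (by positivity) _ (by omega)
      rw [div_lt_one hc0]; exact hc
    simp only [hD]; linarith
  have hbound : ∀ t ∈ Ioi c, ‖jf n t‖ ≤ D ^ (-(1 / 2) : ℝ) * t ^ (-2 : ℝ) := by
    intro t ht
    have ht1 : 1 < t := lt_trans hc ht
    have ht0 : 0 < t := lt_trans one_pos ht1
    have hA0 : 0 < t ^ m - 1 := by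
      have : (1 : ℝ) < t ^ m := one_lt_pow₀ ht1 (by omega)
      linarith
    have hDt : D * t ^ m ≤ t ^ m - 1 := by
      have h1 : 1 ≤ t ^ m * (1 / c) ^ m := by
        rw [← mul_pow]
        apply one_le_pow₀
        rw [mul_one_div, le_div_iff₀ hc0, one_mul]
        exact le_of_lt ht
      rw [hD]
      nlinarith [h1]
    have hDt0 : 0 < D * t ^ m := by positivity
    have h1 : (t ^ m - 1) ^ (-(1 / 2) : ℝ) ≤ (D * t ^ m) ^ (-(1 / 2) : ℝ) :=
      Real.rpow_le_rpow_of_nonpos hDt0 hDt (by norm_num)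
    have h2 : (D * t ^ m) ^ (-(1 / 2) : ℝ)
        = D ^ (-(1 / 2) : ℝ) * (t ^ m) ^ (-(1 / 2) : ℝ) :=
      Real.mul_rpow hD0.le (by positivity)
    have h3 : (t ^ m) ^ (-(1 / 2) : ℝ) = t ^ ((m : ℝ) * (-(1 / 2))) := by
      rw [← Real.rpow_natCast t m, ← Real.rpow_mul ht0.le]
    have h4 : t ^ ((m : ℝ) * (-(1 / 2))) ≤ t ^ (-2 : ℝ) := by
      apply Real.rpow_le_rpow_of_exponent_le ht1.le
      have : (4 : ℝ) ≤ (m : ℝ) := by exact_mod_cast hm4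
      nlinarith
    have hnorm : ‖jf n t‖ = (t ^ m - 1) ^ (-(1 / 2) : ℝ) := by
      rw [Real.norm_eq_abs, show jf n t = (t ^ m - 1) ^ (-(1 / 2) : ℝ) from rfl,
        abs_of_nonneg (Real.rpow_nonneg hA0.le _)]
    rw [hnorm]
    calc (t ^ m - 1) ^ (-(1 / 2) : ℝ) ≤ (D * t ^ m) ^ (-(1 / 2) : ℝ) := h1
      _ = D ^ (-(1 / 2) : ℝ) * (t ^ m) ^ (-(1 / 2) : ℝ) := h2
      _ = D ^ (-(1 / 2) : ℝ) * t ^ ((m : ℝ) * (-(1 / 2))) := by rw [h3]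
      _ ≤ D ^ (-(1 / 2) : ℝ) * t ^ (-2 : ℝ) :=
          mul_le_mul_of_nonneg_left h4 (Real.rpow_nonneg hD0.le _)
  have hg : IntegrableOn (fun t : ℝ => D ^ (-(1 / 2) : ℝ) * t ^ (-2 : ℝ)) (Ioi c) :=
    (integrableOn_Ioi_rpow_of_lt (by norm_num) hc0).const_mul _
  refine hg.integrable.mono'
    (((jf_continuousOn n hn).mono (Ioi_subset_Ioi hc.le)).aestronglyMeasurable
      measurableSet_Ioi) ?_
  rw [ae_restrict_iff' measurableSet_Ioi]
  exact Eventually.of_forall hbound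

lemma hasDerivAt_F (n : ℕ) (hn : 4 ≤ n) {x : ℝ} (hx : 1 < x) :
    HasDerivAt (fun y => ∫ t in Ioi y, jf n t) (-(jf n x)) x := by
  set a : ℝ := (1 + x) / 2 with ha
  have ha1 : 1 < a := by rw [ha]; linarith
  have hax : a < x := by rw [ha]; linarith
  have hInt : IntegrableOn (jf n) (Ioi a) := jf_integrableOn n hn ha1
  have key : ∀ y ∈ Ioi a,
      (∫ t in Ioi y, jf n t)
        = (∫ t in Ioi a, jf n t) - ∫ t in a..y, jf n t := by
    intro y hy
    have hay : a ≤ y := le_of_lt hy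
    have hsplit : (∫ t in Ioi a, jf n t)
        = (∫ t in Ioc a y, jf n t) + ∫ t in Ioi y, jf n t := by
      rw [← setIntegral_union Ioc_disjoint_Ioi_same measurableSet_Ioi
        (hInt.mono_set Ioc_subset_Ioi_self)
        (hInt.mono_set (Ioi_subset_Ioi hay)), Ioc_union_Ioi_eq_Ioi hay]
    rw [intervalIntegral.integral_of_le hay]
    linarith [hsplit]
  have hii : IntervalIntegrable (jf n) volume a x := by
    rw [intervalIntegrable_iff_integrableOn_Ioc_of_le hax.le]
    exact hInt.mono_set Ioc_subset_Ioi_self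
  have hmeas : StronglyMeasurableAtFilter (jf n) (nhds x) volume :=
    (jf_continuousOn n hn).stronglyMeasurableAtFilter isOpen_Ioi x hx
  have hd : HasDerivAt (fun y => (∫ t in Ioi a, jf n t) - ∫ t in a..y, jf n t)
      (-(jf n x)) x :=
    (intervalIntegral.integral_hasDerivAt_right hii hmeas
      (jf_continuousAt n hn hx)).const_sub _
  exact hd.congr_of_eventuallyEq (eventually_of_mem (Ioi_mem_nhds hax) key)

lemma hasDerivAt_jangB (n : ℕ) (hn : 4 ≤ n) {r0 : ℝ} (hr0 : 0 < r0) {s : ℝ}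
    (hs : r0 < s) : HasDerivAt (jangB n r0) (-(jf n (s / r0))) s := by
  have hu : 1 < s / r0 := (one_lt_div hr0).2 hs
  have hdiv : HasDerivAt (fun y : ℝ => y / r0) (1 / r0) s := by
    simpa using (hasDerivAt_id s).div_const r0
  have h := (((hasDerivAt_F n hn hu).comp s hdiv).const_mul r0)
  have heq : r0 * (-(jf n (s / r0)) * (1 / r0)) = -(jf n (s / r0)) := by
    field_simp
  rw [heq] at h
  exact h

lemma hasDerivAt_jf (n : ℕ) (hn : 4 ≤ n) {t : ℝ} (ht : 1 < t) :
    HasDerivAt (jf n)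
      ((-(1 / 2) : ℝ) * (t ^ (2 * n - 4) - 1) ^ ((-(1 / 2) : ℝ) - 1)
        * (((2 * n - 4 : ℕ) : ℝ) * t ^ (2 * n - 4 - 1))) t := by
  have hA0 : (0 : ℝ) < t ^ (2 * n - 4) - 1 := by
    have : (1 : ℝ) < t ^ (2 * n - 4) := one_lt_pow₀ ht (by omega)
    linarith
  have hinner : HasDerivAt (fun y : ℝ => y ^ (2 * n - 4) - 1)
      (((2 * n - 4 : ℕ) : ℝ) * t ^ (2 * n - 4 - 1)) t :=
    (hasDerivAt_pow (2 * n - 4) t).sub_const 1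
  have houter : HasDerivAt (fun y : ℝ => y ^ (-(1 / 2) : ℝ))
      ((-(1 / 2) : ℝ) * (t ^ (2 * n - 4) - 1) ^ ((-(1 / 2) : ℝ) - 1))
      (t ^ (2 * n - 4) - 1) :=
    Real.hasDerivAt_rpow_const (Or.inl hA0.ne')
  exact houter.comp t hinner

end JangAux

/-- `b` is twice differentiable on `(r0, ∞)` and satisfies the ODE
`s·b''(s) + (n-1)·(1 + b'(s)²)·b'(s) = -(1 + b'(s)²)^{3/2} · r0^{n-2} · s^{2-n}`. -/
theorem jangB_ode (n : ℕ) (hn : 4 ≤ n) (r0 : ℝ) (hr0 : 0 < r0) :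
    ∀ s ∈ Set.Ioi r0,
      DifferentiableAt ℝ (jangB n r0) s ∧
      DifferentiableAt ℝ (deriv (jangB n r0)) s ∧
      s * deriv (deriv (jangB n r0)) s
          + ((n : ℝ) - 1) * (1 + (deriv (jangB n r0) s) ^ 2) * deriv (jangB n r0) s
        = -(1 + (deriv (jangB n r0) s) ^ 2) ^ ((3 : ℝ) / 2)
            * r0 ^ ((n : ℝ) - 2) * s ^ ((2 : ℝ) - n) := by
  intro s hs
  rw [Set.mem_Ioi] at hs
  have hs0 : 0 < s := lt_trans hr0 hs
  set m : ℕ := 2 * n - 4 with hmdef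
  set u : ℝ := s / r0 with hudef
  have hu : 1 < u := (one_lt_div hr0).2 hs
  have hu0 : 0 < u := lt_trans one_pos hu
  have hA0 : (0 : ℝ) < u ^ m - 1 := by
    have : (1 : ℝ) < u ^ m := one_lt_pow₀ hu (by omega)
    linarith
  set A : ℝ := u ^ m - 1 with hAdef
  have hsru : s = r0 * u := by rw [hudef]; field_simp
  -- first derivative
  have hb' : HasDerivAt (jangB n r0) (-(JangAux.jf n u)) s :=
    JangAux.hasDerivAt_jangB n hn hr0 hs
  -- second derivative
  have hdiv : HasDerivAt (fun y : ℝ => y / r0) (1 / r0) s := by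
    simpa using (hasDerivAt_id s).div_const r0
  have hg : HasDerivAt (fun y : ℝ => -(JangAux.jf n (y / r0)))
      (-((-(1 / 2) : ℝ) * A ^ ((-(1 / 2) : ℝ) - 1) * ((m : ℝ) * u ^ (m - 1))
        * (1 / r0))) s := by
    rw [hAdef]
    exact (((JangAux.hasDerivAt_jf n hn hu).comp s hdiv)).neg
  have hEq : deriv (jangB n r0) =ᶠ[nhds s] fun y => -(JangAux.jf n (y / r0)) := by
    refine eventually_of_mem (Ioi_mem_nhds hs) fun y hy => ?_
    exact (JangAux.hasDerivAt_jangB n hn hr0 hy).deriv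
  have hb'' : HasDerivAt (deriv (jangB n r0))
      (-((-(1 / 2) : ℝ) * A ^ ((-(1 / 2) : ℝ) - 1) * ((m : ℝ) * u ^ (m - 1))
        * (1 / r0))) s :=
    hg.congr_of_eventuallyEq hEq
  refine ⟨hb'.differentiableAt, hb''.differentiableAt, ?_⟩
  rw [hb''.deriv, hb'.deriv]
  -- algebra
  have hjf : JangAux.jf n u = A ^ (-(1 / 2) : ℝ) := by rw [hAdef]; rfl
  rw [hjf]
  set Q : ℝ := A ^ (-(1 / 2) : ℝ) with hQdef
  set P : ℝ := A ^ (-(3 / 2) : ℝ) with hPdef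
  have e1 : A ^ ((-(1 / 2) : ℝ) - 1) = P := by rw [hPdef]; norm_num
  have e2 : Q ^ 2 = A⁻¹ := by
    rw [hQdef, ← Real.rpow_natCast (A ^ (-(1 / 2) : ℝ)) 2, ← Real.rpow_mul hA0.le]
    norm_num [Real.rpow_neg_one]
  have e3 : A⁻¹ * Q = P := by
    rw [hQdef, hPdef, ← Real.rpow_neg_one A, ← Real.rpow_add hA0]
    norm_num
  have hU : A + 1 = u ^ m := by rw [hAdef]; ring
  have e4 : 1 + Q ^ 2 = u ^ m / A := by
    rw [e2]; field_simp; linarith [hU]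
  have hmcast : (m : ℝ) = 2 * (n : ℝ) - 4 := by
    rw [hmdef, Nat.cast_sub (by omega)]; push_cast; ring
  have e7 : u * u ^ (m - 1) = u ^ m := by
    rw [← pow_succ']
    congr 1
    omega
  -- e5 : RHS product
  have h1 : (1 + Q ^ 2) ^ ((3 : ℝ) / 2)
      = u ^ ((m : ℝ) * (3 / 2)) * (A ^ ((3 : ℝ) / 2))⁻¹ := by
    rw [e4, Real.div_rpow (by positivity) hA0.le, ← Real.rpow_natCast u m,
      ← Real.rpow_mul hu0.le, div_eq_mul_inv]
  have h2 : s ^ ((2 : ℝ) - n) = r0 ^ ((2 : ℝ) - n) * u ^ ((2 : ℝ) - n) := by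
    rw [hsru, Real.mul_rpow hr0.le hu0.le]
  have h3 : r0 ^ ((n : ℝ) - 2) * r0 ^ ((2 : ℝ) - n) = 1 := by
    rw [← Real.rpow_add hr0]
    norm_num
  have h4 : u ^ ((m : ℝ) * (3 / 2)) * u ^ ((2 : ℝ) - n) = u ^ m := by
    rw [← Real.rpow_add hu0, ← Real.rpow_natCast u m]
    congr 1
    rw [hmcast]; ring
  have h5 : (A ^ ((3 : ℝ) / 2))⁻¹ = P := by
    rw [hPdef, ← Real.rpow_neg hA0.le]
  have e5 : (1 + Q ^ 2) ^ ((3 : ℝ) / 2) * r0 ^ ((n : ℝ) - 2) * s ^ ((2 : ℝ) - n)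
      = u ^ m * P := by
    calc (1 + Q ^ 2) ^ ((3 : ℝ) / 2) * r0 ^ ((n : ℝ) - 2) * s ^ ((2 : ℝ) - n)
        = (u ^ ((m : ℝ) * (3 / 2)) * (A ^ ((3 : ℝ) / 2))⁻¹) * r0 ^ ((n : ℝ) - 2)
            * (r0 ^ ((2 : ℝ) - n) * u ^ ((2 : ℝ) - n)) := by rw [h1, h2]
      _ = (u ^ ((m : ℝ) * (3 / 2)) * u ^ ((2 : ℝ) - n))
            * (r0 ^ ((n : ℝ) - 2) * r0 ^ ((2 : ℝ) - n)) * (A ^ ((3 : ℝ) / 2))⁻¹ := by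
            ring
      _ = u ^ m * P := by rw [h3, h4, h5]; ring
  have t1 : s * -((-(1 / 2) : ℝ) * P * ((m : ℝ) * u ^ (m - 1)) * (1 / r0))
      = ((n : ℝ) - 2) * (u ^ m * P) := by
    rw [hmcast, hsru, ← e7]
    field_simp
    ring
  have hQP : u ^ m / A * Q = u ^ m * P := by
    rw [div_eq_mul_inv, mul_assoc, e3]
  have t2 : ((n : ℝ) - 1) * (1 + Q ^ 2) * -Q = -(((n : ℝ) - 1) * (u ^ m * P)) := by
    rw [e4]
    linear_combination (-((n : ℝ) - 1)) * hQP
  rw [e1]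
  simp only [neg_sq]
  linear_combination t1 + t2 + e5
end

section
/- Fix an integer n ≥ 4 and a real number r0 > 0, and define b : (r0, ∞) → ℝ by b(s) = r0 · ∫_{s/r0}^∞ (t^{2n−4} − 1)^{−1/2} dt. Then b(s) ≤ 2 · r0^{n−2} · s^{3−n} for every s ∈ (2·r0, ∞). -/
open MeasureTheory Set Real

theorem sub_one_rpow_neg_half_le {y : ℝ} (hy : 4 / 3 ≤ y) :
    (y - 1) ^ (-(1 / 2) : ℝ) ≤ 2 * y ^ (-(1 / 2) : ℝ) := by
  have hfour : (4 : ℝ) ^ (-(1 / 2) : ℝ) = 1 / 2 := by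
    rw [show (4 : ℝ) = 2 ^ (2 : ℝ) by norm_num, ← rpow_mul zero_le_two]
    norm_num
  calc (y - 1) ^ (-(1 / 2) : ℝ) ≤ (y / 4) ^ (-(1 / 2) : ℝ) :=
        rpow_le_rpow_of_nonpos (by positivity) (by linarith) (by norm_num)
    _ = 2 * y ^ (-(1 / 2) : ℝ) := by
        rw [div_rpow (by linarith) zero_le_four, hfour]
        ring

theorem pow_two_mul_sub_one_rpow_neg_half_le {m : ℕ} (hm : 1 ≤ m) {t : ℝ} (ht : 2 ≤ t) :
    (t ^ (2 * m) - 1) ^ (-(1 / 2) : ℝ) ≤ 2 * t ^ (-(m : ℝ)) := by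
  have hsq : t ^ 2 ≤ t ^ (2 * m) := pow_le_pow_right₀ (by linarith) (by omega)
  have hroot : (t ^ (2 * m)) ^ (-(1 / 2) : ℝ) = t ^ (-(m : ℝ)) := by
    rw [← rpow_natCast, ← rpow_mul (by linarith)]
    push_cast
    ring_nf
  rw [← hroot]
  exact sub_one_rpow_neg_half_le (by nlinarith)

theorem integral_Ioi_pow_two_mul_sub_one_rpow_neg_half_le {m : ℕ} (hm : 2 ≤ m) {x : ℝ}
    (hx : 2 ≤ x) :
    ∫ t in Ioi x, (t ^ (2 * m) - 1) ^ (-(1 / 2) : ℝ) ≤ 2 * x ^ (1 - (m : ℝ)) / ((m : ℝ) - 1) := by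
  have hm' : (2 : ℝ) ≤ m := by exact_mod_cast hm
  have hexp : -(m : ℝ) < -1 := by linarith
  calc ∫ t in Ioi x, (t ^ (2 * m) - 1) ^ (-(1 / 2) : ℝ)
      ≤ ∫ t in Ioi x, 2 * t ^ (-(m : ℝ)) := by
        refine integral_mono_of_nonneg ?_
          ((integrableOn_Ioi_rpow_of_lt hexp (by linarith)).const_mul 2) ?_
        all_goals filter_upwards [ae_restrict_mem measurableSet_Ioi] with t ht
        · have : (1 : ℝ) ≤ t ^ (2 * m) := one_le_pow₀ (by linarith [mem_Ioi.mp ht])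
          exact rpow_nonneg (by linarith) _
        · exact pow_two_mul_sub_one_rpow_neg_half_le (by omega) (hx.trans (le_of_lt ht))
    _ = 2 * x ^ (1 - (m : ℝ)) / ((m : ℝ) - 1) := by
        rw [integral_const_mul, integral_Ioi_rpow_of_lt hexp (by linarith)]
        rw [show -(m : ℝ) + 1 = -((m : ℝ) - 1) by ring, show 1 - (m : ℝ) = -((m : ℝ) - 1) by ring]
        rw [div_neg, neg_div, neg_neg, mul_div_assoc]

theorem mul_div_rpow_one_sub {a s : ℝ} (ha : 0 < a) (hs : 0 ≤ s) (p : ℝ) :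
    a * (s / a) ^ (1 - p) = a ^ p * s ^ (1 - p) := by
  rw [div_rpow hs ha.le, rpow_sub ha, rpow_one]
  field_simp

/-- Proposition `bound.for.b`: `b(s) ≤ 2 · r0^{n-2} · s^{3-n}` for
every `s ∈ (2r0, ∞)`. -/
theorem jangB_le_two_mul (n : ℕ) (hn : 4 ≤ n) (r0 : ℝ) (hr0 : 0 < r0) :
    ∀ s ∈ Set.Ioi (2 * r0),
      jangB n r0 s ≤ 2 * r0 ^ ((n : ℝ) - 2) * s ^ ((3 : ℝ) - n) := by
  intro s hs
  have hx : 2 ≤ s / r0 := (le_div_iff₀ hr0).2 (le_of_lt hs)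
  have hm : ((n - 2 : ℕ) : ℝ) = n - 2 := by rw [Nat.cast_sub (by omega), Nat.cast_two]
  have hn' : (4 : ℝ) ≤ n := by exact_mod_cast hn
  have hbound := integral_Ioi_pow_two_mul_sub_one_rpow_neg_half_le (m := n - 2) (by omega) hx
  rw [hm] at hbound
  calc jangB n r0 s
      = r0 * ∫ t in Ioi (s / r0), (t ^ (2 * (n - 2)) - 1) ^ (-(1 / 2) : ℝ) := by
        rw [jangB, show 2 * n - 4 = 2 * (n - 2) by omega]
    _ ≤ r0 * (2 * (s / r0) ^ (1 - ((n : ℝ) - 2)) / ((n : ℝ) - 2 - 1)) := by gcongr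
    _ ≤ r0 * (2 * (s / r0) ^ (1 - ((n : ℝ) - 2))) := by
        gcongr
        exact div_le_self (by positivity) (by linarith)
    _ = 2 * r0 ^ ((n : ℝ) - 2) * s ^ ((3 : ℝ) - n) := by
        rw [mul_left_comm, mul_div_rpow_one_sub hr0 (by linarith [mem_Ioi.mp hs]),
          show (3 : ℝ) - n = 1 - ((n : ℝ) - 2) by ring, mul_assoc]
end

section
/- Fix an integer n ≥ 4 and a real number r0 > 0, define b : (r0, ∞) → ℝ by b(s) = r0 · ∫_{s/r0}^∞ (t^{2n−4} − 1)^{−1/2} dt, and define Υ : {x ∈ ℝⁿ : ‖x‖ > r0} → ℝ by Υ(x) = b(‖x‖), where ‖·‖ is the Euclidean norm. Then for every x with ‖x‖ > r0, writing p ∈ ℝⁿ for the gradient of Υ at x and H for the Hessian matrix of second partial derivatives of Υ at x, one has Σ_{i,j} (δ_{ij} − (1 + ‖p‖²)^{−1} p_i p_j) · (1 + ‖p‖²)^{−1/2} · H_{ij} = −r0^{n−2} · ‖x‖^{1−n}. -/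
noncomputable def pder {n : ℕ} (f : EuclideanSpace ℝ (Fin n) → ℝ) (i : Fin n)
    (x : EuclideanSpace ℝ (Fin n)) : ℝ :=
  fderiv ℝ f x (EuclideanSpace.single i 1)

open Set MeasureTheory Filter Topology

theorem hasFDerivAt_norm_of_ne_zero {E : Type*} [NormedAddCommGroup E] [InnerProductSpace ℝ E]
    {x : E} (hx : x ≠ 0) : HasFDerivAt (‖·‖) (‖x‖⁻¹ • innerSL ℝ x) x := by
  have h := (hasStrictFDerivAt_norm_sq x).hasFDerivAt.sqrt (by positivity)
  simp only [Real.sqrt_sq (norm_nonneg _)] at h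
  convert h using 1
  ext v
  simp only [smul_apply, coe_innerSL_apply, smul_eq_mul, one_div, mul_inv_rev,
    nsmul_eq_mul, Nat.cast_ofNat]
  field_simp

theorem HasDerivAt.div_sqrt_one_add_sq {g : ℝ → ℝ} {g' r : ℝ} (hg : HasDerivAt g g' r) :
    HasDerivAt (fun s => g s / √(1 + g s ^ 2)) (g' / √(1 + g r ^ 2) ^ 3) r := by
  have hpos : 0 < 1 + g r ^ 2 := by positivity
  have hsq : √(1 + g r ^ 2) ^ 2 = 1 + g r ^ 2 := Real.sq_sqrt hpos.le
  refine (hg.div (((hg.pow 2).const_add 1).sqrt hpos.ne') (by positivity)).congr_deriv ?_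
  simp only [Pi.pow_apply]
  field_simp
  rw [hsq]
  ring

theorem hasDerivAt_neg_div_pow (k : ℕ) (c : ℝ) {s : ℝ} (hs : s ≠ 0) :
    HasDerivAt (fun t => -(c / t) ^ k) (k * (c / s) ^ k / s) s := by
  refine (((hasDerivAt_const s c).div (hasDerivAt_id' s) hs).pow k).neg.congr_deriv ?_
  rcases k with _ | k
  · simp
  · simp only [Pi.div_apply]
    rw [Nat.add_sub_cancel, pow_succ, div_pow, div_pow]
    field_simp
    ring

theorem rpow_sub_two_mul_rpow_one_sub {n : ℕ} (hn : 2 ≤ n) (a : ℝ) {r : ℝ} (hr : 0 < r) :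
    a ^ ((n : ℝ) - 2) * r ^ ((1 : ℝ) - n) = (a / r) ^ (n - 2) / r := by
  obtain ⟨k, rfl⟩ : ∃ k, n = k + 2 := ⟨n - 2, by omega⟩
  have hexp : (1 : ℝ) - ↑(k + 2) = -((k + 1 : ℕ) : ℝ) := by push_cast; ring
  rw [hexp, Real.rpow_neg hr.le, Nat.add_sub_cancel, Nat.cast_add, Nat.cast_two,
    add_sub_cancel_right, Real.rpow_natCast, Real.rpow_natCast, div_pow, pow_succ]
  field_simp

theorem hasDerivAt_setIntegral_Ioi {E : Type*} [NormedAddCommGroup E] [NormedSpace ℝ E]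
    [CompleteSpace E] {f : ℝ → E} {a s : ℝ} (has : a < s) (hf : IntegrableOn f (Ioi a))
    (hfs : ContinuousAt f s) :
    HasDerivAt (fun u => ∫ t in Ioi u, f t) (-f s) s := by
  have hsplit : ∀ u ∈ Ioi a, ∫ t in Ioi u, f t = (∫ t in Ioi a, f t) - ∫ t in a..u, f t := by
    intro u hu
    rw [intervalIntegral.integral_of_le (le_of_lt hu), eq_sub_iff_add_eq, add_comm,
      ← setIntegral_union (Ioc_disjoint_Ioi le_rfl) measurableSet_Ioi
        (hf.mono_set Ioc_subset_Ioi_self) (hf.mono_set (Ioi_subset_Ioi (le_of_lt hu))),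
      Ioc_union_Ioi_eq_Ioi (le_of_lt hu)]
  have hFTC := intervalIntegral.integral_hasDerivAt_right
    ((intervalIntegrable_iff_integrableOn_Ioc_of_le has.le).2 (hf.mono_set Ioc_subset_Ioi_self))
    (AEStronglyMeasurable.stronglyMeasurableAtFilter_of_mem hf.aestronglyMeasurable
      (Ioi_mem_nhds has)) hfs
  exact (hFTC.const_sub _).congr_of_eventuallyEq (eventually_of_mem (Ioi_mem_nhds has) hsplit)

theorem integrableOn_Ioi_pow_sub_one_rpow_neg_half {m : ℕ} (hm : 2 < m) {s : ℝ} (hs : 1 < s) :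
    IntegrableOn (fun t : ℝ => (t ^ m - 1) ^ (-(1 / 2) : ℝ)) (Ioi s) := by
  have hs0 : 0 < s := one_pos.trans hs
  have hsm : 1 < s ^ m := one_lt_pow₀ hs (by omega)
  set c : ℝ := 1 - (s ^ m)⁻¹
  have hc : 0 < c := sub_pos.2 (inv_lt_one_of_one_lt₀ hsm)
  have hmajor : IntegrableOn (fun t : ℝ => c ^ (-(1 / 2) : ℝ) * t ^ (-(m / 2 : ℝ))) (Ioi s) :=
    (integrableOn_Ioi_rpow_of_lt (by
      have : (2 : ℝ) < m := by exact_mod_cast hm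
      linarith) hs0).const_mul _
  refine hmajor.mono' ?_ ?_
  · refine ContinuousOn.aestronglyMeasurable (fun t (ht : s < t) => ?_) measurableSet_Ioi
    have : 0 < t ^ m - 1 := sub_pos.2 (hsm.trans_le (pow_le_pow_left₀ hs0.le ht.le m))
    exact (((continuous_pow m).continuousAt.sub continuousAt_const).rpow_const
      (Or.inl this.ne')).continuousWithinAt
  · filter_upwards [ae_restrict_mem measurableSet_Ioi] with t (ht : s < t)
    have ht0 : 0 < t := hs0.trans ht
    have hct : c * t ^ m ≤ t ^ m - 1 := by
      have : s ^ m ≤ t ^ m := pow_le_pow_left₀ hs0.le ht.le m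
      have : 0 < s ^ m := by positivity
      simp only [c]
      rw [sub_mul, one_mul, inv_mul_eq_div, sub_le_sub_iff_left, one_le_div (by positivity)]
      assumption
    rw [Real.norm_of_nonneg (Real.rpow_nonneg ((by positivity : 0 ≤ c * t ^ m).trans hct) _)]
    calc (t ^ m - 1) ^ (-(1 / 2) : ℝ) ≤ (c * t ^ m) ^ (-(1 / 2) : ℝ) :=
          Real.rpow_le_rpow_of_nonpos (by positivity) hct (by norm_num)
      _ = c ^ (-(1 / 2) : ℝ) * t ^ (-(m / 2 : ℝ)) := by
          rw [Real.mul_rpow hc.le (by positivity), ← Real.rpow_natCast, ← Real.rpow_mul ht0.le]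
          ring_nf

theorem sum_sum_kronecker_sub_mul {ι : Type*} [Fintype ι] [DecidableEq ι] (x : ι → ℝ)
    (c α β : ℝ) :
    ∑ i, ∑ j, ((if i = j then 1 else 0) - c * x i * x j) *
        (α * (if i = j then 1 else 0) + β * x i * x j) =
      Fintype.card ι * α + β * ∑ k, x k ^ 2 - c * (α * ∑ k, x k ^ 2 + β * (∑ k, x k ^ 2) ^ 2) := by
  have hdiag : ∀ i j, ((if i = j then 1 else 0) - c * x i * x j) *
      (α * (if i = j then 1 else 0) + β * x i * x j) =
      (if i = j then α + (β - c * α) * x i ^ 2 else 0) - c * β * x i ^ 2 * x j ^ 2 := by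
    intro i j
    split_ifs with h
    · subst h; ring
    · ring
  simp only [hdiag, Finset.sum_sub_distrib, Finset.sum_ite_eq, Finset.mem_univ, if_true,
    Finset.sum_add_distrib, ← Finset.mul_sum, ← Finset.sum_mul, Finset.sum_const,
    Finset.card_univ, nsmul_eq_mul]
  ring

/-- For `p = ∇u` and `H = ∇²u` this is `div (∇u / √(1 + |∇u|²))`, the mean curvature of the
graph of `u`. -/
noncomputable def graphMeanCurvature {ι : Type*} [Fintype ι] [DecidableEq ι] (p : ι → ℝ)
    (H : ι → ι → ℝ) : ℝ :=
  ∑ i, ∑ j, ((if i = j then (1 : ℝ) else 0) - (1 + ∑ k, p k ^ 2)⁻¹ * p i * p j)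
    * ((1 + ∑ k, p k ^ 2) ^ (-(1 / 2) : ℝ) * H i j)

theorem graphMeanCurvature_radial {ι : Type*} [Fintype ι] [DecidableEq ι]
    (x : EuclideanSpace ℝ ι) (hx : x ≠ 0) (g g' : ℝ) :
    graphMeanCurvature (fun i => g / ‖x‖ * x i)
        (fun i j => g / ‖x‖ * (if i = j then 1 else 0) + (g' - g / ‖x‖) / ‖x‖ ^ 2 * x i * x j) =
      (Fintype.card ι - 1) * (g / √(1 + g ^ 2)) / ‖x‖ + g' / √(1 + g ^ 2) ^ 3 := by
  have hnorm : ∑ k, x k ^ 2 = ‖x‖ ^ 2 := by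
    rw [EuclideanSpace.norm_eq, Real.sq_sqrt (by positivity)]
    simp only [Real.norm_eq_abs, sq_abs]
  have hgrad : ∑ k, (g / ‖x‖ * x k) ^ 2 = g ^ 2 := by
    simp_rw [mul_pow, ← Finset.mul_sum, hnorm]
    field_simp
  have hpow : (1 + g ^ 2) ^ (-(1 / 2) : ℝ) = (√(1 + g ^ 2))⁻¹ := by
    rw [Real.rpow_neg (by positivity), ← Real.sqrt_eq_rpow]
  have hsq : √(1 + g ^ 2) ^ 2 = 1 + g ^ 2 := Real.sq_sqrt (by positivity)
  have hterm : ∀ i j, ((if i = j then (1 : ℝ) else 0) - (1 + g ^ 2)⁻¹ * (g / ‖x‖ * x i) *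
      (g / ‖x‖ * x j)) * ((√(1 + g ^ 2))⁻¹ *
        (g / ‖x‖ * (if i = j then 1 else 0) + (g' - g / ‖x‖) / ‖x‖ ^ 2 * x i * x j)) =
      (√(1 + g ^ 2))⁻¹ * (((if i = j then 1 else 0) - (1 + g ^ 2)⁻¹ * (g / ‖x‖) ^ 2 * x i * x j) *
        (g / ‖x‖ * (if i = j then 1 else 0) + (g' - g / ‖x‖) / ‖x‖ ^ 2 * x i * x j)) := by
    intro i j
    ring
  simp only [graphMeanCurvature, hgrad, hpow, hterm, ← Finset.mul_sum, sum_sum_kronecker_sub_mul,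
    hnorm]
  field_simp
  rw [hsq]
  ring

section RadialFunction

variable {n : ℕ} {f g : ℝ → ℝ} {x : EuclideanSpace ℝ (Fin n)}

theorem pder_comp_norm (hx : x ≠ 0) {f' : ℝ} (hf : HasDerivAt f f' ‖x‖) (i : Fin n) :
    pder (fun y => f ‖y‖) i x = f' / ‖x‖ * x i := by
  have hderiv : HasFDerivAt (fun y => f ‖y‖) _ x :=
    hf.comp_hasFDerivAt x (hasFDerivAt_norm_of_ne_zero hx)
  rw [pder, hderiv.fderiv]
  simp only [smul_apply, coe_innerSL_apply,
    EuclideanSpace.inner_single_right, Real.ringHom_apply, one_mul, smul_eq_mul]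
  ring

theorem pder_pder_comp_norm (hx : x ≠ 0) (hf : ∀ᶠ s in 𝓝 ‖x‖, HasDerivAt f (g s) s) {g' : ℝ}
    (hg : HasDerivAt g g' ‖x‖) (i j : Fin n) :
    pder (pder (fun y => f ‖y‖) j) i x =
      g ‖x‖ / ‖x‖ * (if i = j then 1 else 0) + (g' - g ‖x‖ / ‖x‖) / ‖x‖ ^ 2 * x i * x j := by
  have hgrad : (pder (fun y => f ‖y‖) j) =ᶠ[𝓝 x] fun y => g ‖y‖ / ‖y‖ * y j := by
    filter_upwards [continuous_norm.continuousAt.eventually hf, eventually_ne_nhds hx]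
      with y hfy hy using pder_comp_norm hy hfy j
  have hr : ‖x‖ ≠ 0 := norm_ne_zero_iff.2 hx
  have hproj : HasFDerivAt (fun y : EuclideanSpace ℝ (Fin n) => y j) _ x :=
    (EuclideanSpace.proj j : EuclideanSpace ℝ (Fin n) →L[ℝ] ℝ).hasFDerivAt
  have hderiv : HasFDerivAt (fun y => g ‖y‖ / ‖y‖ * y j) _ x :=
    ((hg.div (hasDerivAt_id' _) hr).comp_hasFDerivAt x (hasFDerivAt_norm_of_ne_zero hx)).mul hproj
  rw [pder, hgrad.fderiv_eq, hderiv.fderiv]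
  simp only [Function.comp_apply, Pi.div_apply, mul_one, add_apply,
    smul_apply, PiLp.proj_apply, PiLp.single_apply, eq_comm, smul_eq_mul,
    mul_ite, mul_zero, coe_innerSL_apply, EuclideanSpace.inner_single_right, Real.ringHom_apply,
    one_mul, add_right_inj]
  field_simp

theorem graphMeanCurvature_pder_comp_norm (hx : x ≠ 0)
    (hf : ∀ᶠ s in 𝓝 ‖x‖, HasDerivAt f (g s) s) (hg : DifferentiableAt ℝ g ‖x‖) {ψ : ℝ → ℝ}
    {ψ' : ℝ} (hψ : ∀ᶠ s in 𝓝 ‖x‖, g s / √(1 + g s ^ 2) = ψ s) (hψ' : HasDerivAt ψ ψ' ‖x‖) :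
    graphMeanCurvature (fun i => pder (fun y => f ‖y‖) i x)
        (fun i j => pder (pder (fun y => f ‖y‖) j) i x) =
      (n - 1) * ψ ‖x‖ / ‖x‖ + ψ' := by
  have hflux : HasDerivAt ψ _ ‖x‖ :=
    hg.hasDerivAt.div_sqrt_one_add_sq.congr_of_eventuallyEq (hψ.mono fun _ h => h.symm)
  simp only [pder_comp_norm hx hf.self_of_nhds, pder_pder_comp_norm hx hf hg.hasDerivAt]
  rw [graphMeanCurvature_radial x hx, Fintype.card_fin, hψ.self_of_nhds, hψ'.unique hflux]

end RadialFunction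

noncomputable def jangSlope (n : ℕ) (r0 s : ℝ) : ℝ :=
  -((s / r0) ^ (2 * n - 4) - 1) ^ (-(1 / 2) : ℝ)

section Barrier

variable {n : ℕ} {r0 s : ℝ}

theorem div_pow_sub_one_pos {m : ℕ} (hm : m ≠ 0) (hr0 : 0 < r0) (hs : r0 < s) :
    0 < (s / r0) ^ m - 1 :=
  sub_pos.2 (one_lt_pow₀ ((one_lt_div hr0).2 hs) hm)

theorem hasDerivAt_jangB (hn : 4 ≤ n) (hr0 : 0 < r0) (hs : r0 < s) :
    HasDerivAt (jangB n r0) (jangSlope n r0 s) s := by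
  obtain ⟨a, ha1, has⟩ := exists_between ((one_lt_div hr0).2 hs)
  have htail := hasDerivAt_setIntegral_Ioi has
    (integrableOn_Ioi_pow_sub_one_rpow_neg_half (m := 2 * n - 4) (by omega) ha1)
    (((continuous_pow _).continuousAt.sub continuousAt_const).rpow_const
      (Or.inl (div_pow_sub_one_pos (by omega) hr0 hs).ne'))
  refine ((htail.comp s ((hasDerivAt_id s).div_const r0)).const_mul r0).congr_deriv ?_
  field_simp
  rfl

theorem differentiableAt_jangSlope (hn : 3 ≤ n) (hr0 : 0 < r0) (hs : r0 < s) :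
    DifferentiableAt ℝ (jangSlope n r0) s :=
  (DifferentiableAt.rpow_const (f := fun t => (t / r0) ^ (2 * n - 4) - 1) (by fun_prop)
    (Or.inl (div_pow_sub_one_pos (by omega) hr0 hs).ne')).neg

theorem jangSlope_div_sqrt (hn : 3 ≤ n) (hr0 : 0 < r0) (hs : r0 < s) :
    jangSlope n r0 s / √(1 + jangSlope n r0 s ^ 2) = -(r0 / s) ^ (n - 2) := by
  have hA := div_pow_sub_one_pos (m := 2 * n - 4) (by omega) hr0 hs
  set w := (s / r0) ^ (n - 2)
  have hw : 0 < w := by have := hr0.trans hs; positivity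
  have hw2 : (s / r0) ^ (2 * n - 4) = w ^ 2 := by rw [← pow_mul]; congr 1; omega
  have hslope : jangSlope n r0 s = -(√(w ^ 2 - 1))⁻¹ := by
    rw [jangSlope, hw2, Real.rpow_neg (hw2 ▸ hA.le), ← Real.sqrt_eq_rpow]
  rw [hw2] at hA
  have hsqrt : √(1 + jangSlope n r0 s ^ 2) = w / √(w ^ 2 - 1) := by
    rw [hslope, Real.sqrt_eq_iff_mul_self_eq_of_pos (by positivity)]
    field_simp
    rw [Real.sq_sqrt hA.le]
    ring
  have hinv : (r0 / s) ^ (n - 2) = w⁻¹ := by rw [← inv_div s r0, inv_pow]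
  rw [hsqrt, hslope, hinv]
  field_simp

end Barrier

/-- with `Υ(x) = b(‖x‖)` on `{‖x‖ > r0}`, denoting by `p` the gradient
of `Υ` at `x` (components `p i = ∂_i Υ(x)`) and by `H` its Hessian matrix
(`H i j = ∂_i ∂_j Υ(x)`), one has
`∑_{i,j} (δ_{ij} - (1+‖p‖²)⁻¹ p_i p_j) (1+‖p‖²)^{-1/2} H_{ij} = -r0^{n-2} ‖x‖^{1-n}`. -/
theorem jang_operator_of_barrier (n : ℕ) (hn : 4 ≤ n) (r0 : ℝ) (hr0 : 0 < r0)
    (x : EuclideanSpace ℝ (Fin n)) (hx : r0 < ‖x‖)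
    (p : Fin n → ℝ) (hp : ∀ i, p i = pder (fun y => jangB n r0 ‖y‖) i x)
    (H : Fin n → Fin n → ℝ)
    (hH : ∀ i j, H i j = pder (pder (fun y => jangB n r0 ‖y‖) j) i x) :
    ∑ i, ∑ j,
        ((if i = j then (1 : ℝ) else 0) - (1 + ∑ k, p k ^ 2)⁻¹ * p i * p j)
          * ((1 + ∑ k, p k ^ 2) ^ (-(1 / 2) : ℝ) * H i j)
      = -(r0 ^ ((n : ℝ) - 2) * ‖x‖ ^ ((1 : ℝ) - n)) := by
  have hr : 0 < ‖x‖ := hr0.trans hx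
  have hslope : ∀ᶠ s in 𝓝 ‖x‖, HasDerivAt (jangB n r0) (jangSlope n r0 s) s :=
    eventually_of_mem (Ioi_mem_nhds hx) fun _ hs => hasDerivAt_jangB hn hr0 hs
  have hflux : ∀ᶠ s in 𝓝 ‖x‖,
      jangSlope n r0 s / √(1 + jangSlope n r0 s ^ 2) = -(r0 / s) ^ (n - 2) :=
    eventually_of_mem (Ioi_mem_nhds hx) fun _ hs => jangSlope_div_sqrt (by omega) hr0 hs
  obtain rfl : p = _ := funext hp
  obtain rfl : H = _ := funext fun i => funext (hH i)
  change graphMeanCurvature _ _ = _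
  rw [graphMeanCurvature_pder_comp_norm (norm_pos_iff.1 hr) hslope
    (differentiableAt_jangSlope (by omega) hr0 hx) hflux (hasDerivAt_neg_div_pow _ r0 hr.ne'),
    rpow_sub_two_mul_rpow_one_sub (by omega) r0 hr, Nat.cast_sub (by omega : 2 ≤ n)]
  push_cast
  ring
end

section
/- (Euclidean C⁰ maximum-principle estimate for the modified Jang equation.) Let n be a positive integer, let Ω ⊂ ℝⁿ (Euclidean n-space) be a nonempty bounded open set, let τ > 0, let λ be a real number with |λ| ≤ 1, let β ≥ 0, let ζ be a continuous function on the closure of Ω with values in [0,1], and let q assign continuously to each point of the closure of Ω a symmetric n×n real matrix. Let w be continuous on the closure of Ω and twice continuously differentiable on Ω, and suppose that at every point of Ω one has Σ_{i,j} (δ_{ij} − (1 + ‖∇w‖²)^{−1} ∂_i w ∂_j w)·((1 + ‖∇w‖²)^{−1/2} ∂_i ∂_j w − λ·q_{ij}) = τ²·ζ²·w, that w = 0 at every point of the boundary ∂Ω, and that |w(x)| ≤ β at every point x ∈ Ω where ζ(x) < 1. Then sup over the closure of Ω of |w| is at most max{β, τ^{−2}·sup over the closure of Ω of n·‖q‖},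 where ‖q‖ denotes the pointwise Frobenius norm of q. -/
open Filter Topology

theorem IsLocalMax.deriv_deriv_nonpos {f : ℝ → ℝ} {a : ℝ} (h : IsLocalMax f a)
    (hc : ContinuousAt f a) : deriv (deriv f) a ≤ 0 := by
  by_contra! hpos
  -- the second-derivative test makes `a` a local minimum too, so `f` is locally constant
  have hmin : IsLocalMin f a := isLocalMin_of_deriv_deriv_pos hpos h.deriv_eq_zero hc
  have hconst : f =ᶠ[𝓝 a] fun _ => f a := by
    filter_upwards [h, hmin] with y hy₁ hy₂ using le_antisymm hy₁ hy₂
  simp [hconst.deriv.deriv_eq] at hpos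

section NormedSpace

variable {E : Type*} [NormedAddCommGroup E] [NormedSpace ℝ E]

theorem IsLocalMax.fderiv_fderiv_apply_nonpos {f : E → ℝ} {x : E} (h : IsLocalMax f x)
    (hf : ContDiffAt ℝ 2 f x) (v : E) : fderiv ℝ (fun y => fderiv ℝ f y v) x v ≤ 0 := by
  set g : ℝ → ℝ := fun t => f (x + t • v)
  have hline : ∀ t : ℝ, HasDerivAt (fun s : ℝ => x + s • v) v t := fun t => by
    simpa using ((hasDerivAt_id t).smul_const v).const_add x
  have hdiff : ∀ᶠ t in 𝓝 (0 : ℝ), DifferentiableAt ℝ f (x + t • v) :=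
    (hline 0).continuousAt.tendsto.eventually (by
      simpa using (hf.eventually (by simp)).mono fun y hy => hy.differentiableAt (by norm_num))
  have hderiv : deriv g =ᶠ[𝓝 0] fun t => fderiv ℝ f (x + t • v) v := by
    filter_upwards [hdiff] with t ht using (ht.hasFDerivAt.comp_hasDerivAt t (hline t)).deriv
  have hf' : DifferentiableAt ℝ (fun y => fderiv ℝ f y v) x :=
    ((hf.fderiv_right (m := 1) (by norm_num)).differentiableAt (by norm_num)).clm_apply
      (differentiableAt_const v)
  have hsecond : deriv (deriv g) 0 = fderiv ℝ (fun y => fderiv ℝ f y v) x v := by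
    have hf'0 : HasFDerivAt (fun y => fderiv ℝ f y v) (fderiv ℝ (fun y => fderiv ℝ f y v) x)
        (x + (0 : ℝ) • v) := by simpa using hf'.hasFDerivAt
    rw [hderiv.deriv_eq]
    exact (hf'0.comp_hasDerivAt (0 : ℝ) (hline 0)).deriv
  rw [← hsecond]
  refine IsLocalMax.deriv_deriv_nonpos ?_ ?_
  · have h0 : IsLocalMax f (x + (0 : ℝ) • v) := by simpa using h
    exact h0.comp_continuous (g := fun t : ℝ => x + t • v) (hline 0).continuousAt
  · exact ContinuousAt.comp (g := f) (f := fun t : ℝ => x + t • v)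
      hdiff.self_of_nhds.continuousAt (hline 0).continuousAt

theorem IsLocalMin.fderiv_fderiv_apply_nonneg {f : E → ℝ} {x : E} (h : IsLocalMin f x)
    (hf : ContDiffAt ℝ 2 f x) (v : E) : 0 ≤ fderiv ℝ (fun y => fderiv ℝ f y v) x v := by
  simpa using h.neg.fderiv_fderiv_apply_nonpos hf.neg v

end NormedSpace

theorem abs_trace_le_card_mul_sqrt_sum_sq {ι : Type*} [Fintype ι] (Q : Matrix ι ι ℝ) :
    |Q.trace| ≤ Fintype.card ι * √(∑ i, ∑ j, Q i j ^ 2) := by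
  have hdiag : ∀ i, |Q i i| ≤ √(∑ i, ∑ j, Q i j ^ 2) := fun i =>
    Real.abs_le_sqrt <| (Finset.single_le_sum (f := fun j => Q i j ^ 2)
      (fun j _ => sq_nonneg _) (Finset.mem_univ i)).trans
      (Finset.single_le_sum (f := fun i => ∑ j, Q i j ^ 2)
        (fun i _ => Finset.sum_nonneg fun j _ => sq_nonneg _) (Finset.mem_univ i))
  calc |Q.trace| ≤ ∑ i, |Q i i| := Finset.abs_sum_le_sum_abs _ _
    _ ≤ ∑ _i : ι, √(∑ i, ∑ j, Q i j ^ 2) := Finset.sum_le_sum fun i _ => hdiag i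
    _ = Fintype.card ι * √(∑ i, ∑ j, Q i j ^ 2) := by simp

section Euclidean

variable {n : ℕ}

noncomputable def jangOperator (lam : ℝ) (Q : Matrix (Fin n) (Fin n) ℝ)
    (w : EuclideanSpace ℝ (Fin n) → ℝ) (x : EuclideanSpace ℝ (Fin n)) : ℝ :=
  ∑ i, ∑ j,
    ((if i = j then (1 : ℝ) else 0) - (1 + ∑ k, (pder w k x) ^ 2)⁻¹ * pder w i x * pder w j x)
      * ((1 + ∑ k, (pder w k x) ^ 2) ^ (-(1 / 2) : ℝ) * pder (pder w j) i x - lam * Q i j)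

theorem jangOperator_of_pder_eq_zero {lam : ℝ} {Q : Matrix (Fin n) (Fin n) ℝ}
    {w : EuclideanSpace ℝ (Fin n) → ℝ} {x : EuclideanSpace ℝ (Fin n)}
    (hgrad : ∀ k, pder w k x = 0) :
    jangOperator lam Q w x = ∑ i, pder (pder w i) i x - lam * Q.trace := by
  simp [jangOperator, hgrad, Matrix.trace, Finset.mul_sum]

theorem IsLocalMax.pder_eq_zero {f : EuclideanSpace ℝ (Fin n) → ℝ} {x : EuclideanSpace ℝ (Fin n)}
    (h : IsLocalMax f x) (k : Fin n) : pder f k x = 0 := by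
  simp [pder, h.fderiv_eq_zero]

theorem IsLocalMin.pder_eq_zero {f : EuclideanSpace ℝ (Fin n) → ℝ} {x : EuclideanSpace ℝ (Fin n)}
    (h : IsLocalMin f x) (k : Fin n) : pder f k x = 0 := by
  simp [pder, h.fderiv_eq_zero]

theorem IsLocalMax.mul_abs_le_of_jangOperator_eq {lam c : ℝ}
    {Q : Matrix (Fin n) (Fin n) ℝ} {w : EuclideanSpace ℝ (Fin n) → ℝ}
    {x : EuclideanSpace ℝ (Fin n)} (hmax : IsLocalMax (fun y => |w y|) x)
    (hw : ContDiffAt ℝ 2 w x) (hlam : |lam| ≤ 1) (hpde : jangOperator lam Q w x = c * w x) :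
    c * |w x| ≤ n * √(∑ i, ∑ j, Q i j ^ 2) := by
  have hq : |lam * Q.trace| ≤ n * √(∑ i, ∑ j, Q i j ^ 2) := by
    rw [abs_mul]
    simpa using (mul_le_of_le_one_left (abs_nonneg _) hlam).trans
      (abs_trace_le_card_mul_sqrt_sum_sq Q)
  rcases le_total 0 (w x) with hpos | hneg
  · have hmax' : IsLocalMax w x := by
      filter_upwards [hmax] with y hy
      rw [abs_of_nonneg hpos] at hy
      linarith [le_abs_self (w y)]
    have hΔ : ∑ i, pder (pder w i) i x ≤ 0 :=
      Finset.sum_nonpos fun i _ => hmax'.fderiv_fderiv_apply_nonpos hw _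
    rw [jangOperator_of_pder_eq_zero hmax'.pder_eq_zero] at hpde
    rw [abs_of_nonneg hpos]
    linarith [neg_abs_le (lam * Q.trace)]
  · have hmin : IsLocalMin w x := by
      filter_upwards [hmax] with y hy
      rw [abs_of_nonpos hneg] at hy
      linarith [neg_abs_le (w y)]
    have hΔ : 0 ≤ ∑ i, pder (pder w i) i x :=
      Finset.sum_nonneg fun i _ => hmin.fderiv_fderiv_apply_nonneg hw _
    rw [jangOperator_of_pder_eq_zero hmin.pder_eq_zero] at hpde
    rw [abs_of_nonpos hneg]
    linarith [le_abs_self (lam * Q.trace)]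

end Euclidean

theorem c0_maximum_principle_general (n : ℕ)
    (Ω : Set (EuclideanSpace ℝ (Fin n)))
    (hopen : IsOpen Ω) (hbdd : Bornology.IsBounded Ω)
    (τ : ℝ) (hτ : 0 < τ) (lam : ℝ) (hlam : |lam| ≤ 1) (β : ℝ) (hβ : 0 ≤ β)
    (ζ : EuclideanSpace ℝ (Fin n) → ℝ)
    (q : EuclideanSpace ℝ (Fin n) → Matrix (Fin n) (Fin n) ℝ)
    (hqc : ∀ i j, ContinuousOn (fun x => q x i j) (closure Ω))
    (w : EuclideanSpace ℝ (Fin n) → ℝ)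
    (hwc : ContinuousOn w (closure Ω)) (hw2 : ContDiffOn ℝ 2 w Ω)
    (hpde : ∀ x ∈ Ω,
      ∑ i, ∑ j,
          ((if i = j then (1 : ℝ) else 0)
              - (1 + ∑ k, (pder w k x) ^ 2)⁻¹ * pder w i x * pder w j x)
            * ((1 + ∑ k, (pder w k x) ^ 2) ^ (-(1 / 2) : ℝ) * pder (pder w j) i x
                - lam * q x i j)
        = τ ^ 2 * ζ x ^ 2 * w x)
    (hbc : ∀ x ∈ frontier Ω, w x = 0)
    (hsmall : ∀ x ∈ Ω, ζ x < 1 → |w x| ≤ β) :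
    ∀ x ∈ closure Ω,
      |w x| ≤ max β ((τ ^ 2)⁻¹ *
        sSup ((fun x => (n : ℝ) * Real.sqrt (∑ i, ∑ j, (q x i j) ^ 2)) '' closure Ω)) := by
  intro x hx
  have hK : IsCompact (closure Ω) := hbdd.isCompact_closure
  obtain ⟨x₀, hx₀, hmax⟩ := hK.exists_isMaxOn ⟨x, hx⟩ hwc.abs
  have hx_le : |w x| ≤ |w x₀| := hmax hx
  by_cases hx₀Ω : x₀ ∈ Ω
  swap
  · have hw0 : w x₀ = 0 := hbc x₀ ⟨hx₀, by rwa [hopen.interior_eq]⟩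
    exact hx_le.trans (by simpa [hw0] using Or.inl hβ)
  have hloc : IsLocalMax (fun y => |w y|) x₀ :=
    hmax.isLocalMax (mem_of_superset (hopen.mem_nhds hx₀Ω) subset_closure)
  have hkey : τ ^ 2 * ζ x₀ ^ 2 * |w x₀| ≤ n * √(∑ i, ∑ j, q x₀ i j ^ 2) :=
    hloc.mul_abs_le_of_jangOperator_eq (hw2.contDiffAt (hopen.mem_nhds hx₀Ω)) hlam (hpde x₀ hx₀Ω)
  rcases lt_or_ge (ζ x₀) 1 with hζ | hζ
  · exact le_max_of_le_left (hx_le.trans (hsmall x₀ hx₀Ω hζ))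
  · have hsup : n * √(∑ i, ∑ j, q x₀ i j ^ 2) ≤
        sSup ((fun x => (n : ℝ) * √(∑ i, ∑ j, q x i j ^ 2)) '' closure Ω) :=
      le_csSup (hK.bddAbove_image (by fun_prop)) (Set.mem_image_of_mem _ hx₀)
    refine le_max_of_le_right ((le_inv_mul_iff₀ (by positivity)).2 ?_)
    calc τ ^ 2 * |w x| ≤ τ ^ 2 * 1 * |w x₀| := by rw [mul_one]; gcongr
      _ ≤ τ ^ 2 * ζ x₀ ^ 2 * |w x₀| := by gcongr; exact one_le_pow₀ hζ
      _ ≤ _ := hkey.trans hsup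

/-- Euclidean C⁰ maximum-principle estimate for the modified Jang
equation, cf. Lemma `C0.estimate.version.3`: if `w` solves
`∑_{i,j} (δ_{ij} - (1+‖∇w‖²)⁻¹ ∂_i w ∂_j w)((1+‖∇w‖²)^{-1/2} ∂_i∂_j w - λ q_{ij})
 = τ² ζ² w`
on a nonempty bounded open `Ω ⊂ ℝⁿ`, with `w = 0` on `∂Ω`, and `|w| ≤ β` wherever
`ζ < 1` in `Ω`, then `sup_{closure Ω} |w| ≤ max {β, τ⁻² · sup_{closure Ω} n‖q‖_F}`. -/
theorem c0_maximum_principle (n : ℕ) (hn : 0 < n)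
    (Ω : Set (EuclideanSpace ℝ (Fin n))) (hne : Ω.Nonempty)
    (hopen : IsOpen Ω) (hbdd : Bornology.IsBounded Ω)
    (τ : ℝ) (hτ : 0 < τ) (lam : ℝ) (hlam : |lam| ≤ 1) (β : ℝ) (hβ : 0 ≤ β)
    (ζ : EuclideanSpace ℝ (Fin n) → ℝ)
    (hζc : ContinuousOn ζ (closure Ω))
    (hζ01 : ∀ x ∈ closure Ω, ζ x ∈ Set.Icc (0 : ℝ) 1)
    (q : EuclideanSpace ℝ (Fin n) → Matrix (Fin n) (Fin n) ℝ)
    (hqc : ∀ i j, ContinuousOn (fun x => q x i j) (closure Ω))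
    (hqs : ∀ x ∈ closure Ω, (q x).IsSymm)
    (w : EuclideanSpace ℝ (Fin n) → ℝ)
    (hwc : ContinuousOn w (closure Ω)) (hw2 : ContDiffOn ℝ 2 w Ω)
    (hpde : ∀ x ∈ Ω,
      ∑ i, ∑ j,
          ((if i = j then (1 : ℝ) else 0)
              - (1 + ∑ k, (pder w k x) ^ 2)⁻¹ * pder w i x * pder w j x)
            * ((1 + ∑ k, (pder w k x) ^ 2) ^ (-(1 / 2) : ℝ) * pder (pder w j) i x
                - lam * q x i j)
        = τ ^ 2 * ζ x ^ 2 * w x)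
    (hbc : ∀ x ∈ frontier Ω, w x = 0)
    (hsmall : ∀ x ∈ Ω, ζ x < 1 → |w x| ≤ β) :
    ∀ x ∈ closure Ω,
      |w x| ≤ max β ((τ ^ 2)⁻¹ *
        sSup ((fun x => (n : ℝ) * Real.sqrt (∑ i, ∑ j, (q x i j) ^ 2)) '' closure Ω)) :=
  c0_maximum_principle_general n Ω hopen hbdd τ hτ lam hlam β hβ ζ q hqc w hwc hw2 hpde hbc hsmall
end
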